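/- Any projector onto a state of the form (V ⊗ V)(A(3|ψ⁺⟩+|ψ⁻⟩) + B(|φ⁺⟩−|φ⁻⟩)) with V ∈ SU(2) and A ≠ 0 has weight on the symmetric subspace of ℂ²⊗ℂ² at least 9 times its weight on the antisymmetric subspace. Consequently, no finite sum of such projectors (with A ≠ 0 in each) can equal the identity on ℂ²⊗ℂ², since in the identity the trace over the symmetric subspace (3) is only 3 times that over the antisymmetric subspace (1). -/

import Mathlib

open scoped ComplexConjugate ComplexOrder
open Finset Matrix

noncomputable section

/-- Index set for three qubits: (clone 1, clone 2, ancilla). -/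
abbrev I3 := Fin 2 × Fin 2 × Fin 2

/-- Image of |0⟩|00⟩ under the universal 1→2 cloner:
    √(2/3)|00⟩|1⟩ − (1/√6)(|01⟩+|10⟩)|0⟩. -/
def out0 : I3 → ℂ := fun p =>
  if p = (0, 0, 1) then ((Real.sqrt (2/3) : ℝ) : ℂ)
  else if p = (0, 1, 0) then -(((1 / Real.sqrt 6 : ℝ)) : ℂ)
  else if p = (1, 0, 0) then -(((1 / Real.sqrt 6 : ℝ)) : ℂ)
  else 0

/-- Image of |1⟩|00⟩ under the universal 1→2 cloner:
    −√(2/3)|11⟩|0⟩ + (1/√6)(|10⟩+|01⟩)|1⟩. -/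
def out1 : I3 → ℂ := fun p =>
  if p = (1, 1, 0) then -((Real.sqrt (2/3) : ℝ) : ℂ)
  else if p = (1, 0, 1) then (((1 / Real.sqrt 6 : ℝ)) : ℂ)
  else if p = (0, 1, 1) then (((1 / Real.sqrt 6 : ℝ)) : ℂ)
  else 0

/-- Output of the cloner on input α|0⟩+β|1⟩. -/
def cloneOut (α β : ℂ) : I3 → ℂ := fun p => α * out0 p + β * out1 p

/-- Output density matrix U(|φ⟩⟨φ| ⊗ |00⟩⟨00|)U†. -/
def rhoOut (α β : ℂ) : Matrix I3 I3 ℂ :=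
  Matrix.of fun p q => cloneOut α β p * conj (cloneOut α β q)

/-- Reduced state of the first clone. -/
def rhoC (α β : ℂ) : Matrix (Fin 2) (Fin 2) ℂ :=
  Matrix.of fun i j => ∑ b : Fin 2, ∑ c : Fin 2, rhoOut α β (i, b, c) (j, b, c)

/-- Reduced state of the ancilla. -/
def rhoA (α β : ℂ) : Matrix (Fin 2) (Fin 2) ℂ :=
  Matrix.of fun i j => ∑ a : Fin 2, ∑ b : Fin 2, rhoOut α β (a, b, i) (a, b, j)

/-- Reduced state of the two clones. -/
def rhoCC (α β : ℂ) : Matrix (Fin 2 × Fin 2) (Fin 2 × Fin 2) ℂ :=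
  Matrix.of fun p q => ∑ c : Fin 2, rhoOut α β (p.1, p.2, c) (q.1, q.2, c)

def σx : Matrix (Fin 2) (Fin 2) ℂ := !![0, 1; 1, 0]
def σy : Matrix (Fin 2) (Fin 2) ℂ := !![0, -Complex.I; Complex.I, 0]
def σz : Matrix (Fin 2) (Fin 2) ℂ := !![1, 0; 0, -1]

/-- s·σ for a real 3-vector s. -/
def pauliDot (s : Fin 3 → ℝ) : Matrix (Fin 2) (Fin 2) ℂ :=
  ((s 0 : ℝ) : ℂ) • σx + ((s 1 : ℝ) : ℂ) • σy + ((s 2 : ℝ) : ℂ) • σz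

/-- (1/2)(I + s·σ), the state with Bloch vector s. -/
def blochMat (s : Fin 3 → ℝ) : Matrix (Fin 2) (Fin 2) ℂ :=
  (1/2 : ℂ) • (1 + pauliDot s)

def φvec (α β : ℂ) : Fin 2 → ℂ := ![α, β]

/-- Outer product |v⟩⟨v| on a qubit. -/
def outer (v : Fin 2 → ℂ) : Matrix (Fin 2) (Fin 2) ℂ :=
  Matrix.of fun i j => v i * conj (v j)

/-- The images U(|i⟩|00⟩) of the two input basis states. -/
def Uout : Fin 2 → I3 → ℂ := ![out0, out1]

/-- Effective operator on the input qubit corresponding to an operator F on the output: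
    E i j = ⟨U(|i⟩|00⟩)| F |U(|j⟩|00⟩)⟩ = (⟨00|_{ba} U† F U |00⟩_{ba}) i j. -/
def effOf (F : Matrix I3 I3 ℂ) : Matrix (Fin 2) (Fin 2) ℂ :=
  Matrix.of fun i j => ∑ p : I3, ∑ q : I3, conj (Uout i p) * F p q * Uout j q

/-- F ⊗ I ⊗ I: a measurement on the first clone only. -/
def extC (F : Matrix (Fin 2) (Fin 2) ℂ) : Matrix I3 I3 ℂ :=
  Matrix.of fun p q => F p.1 q.1 * (if p.2 = q.2 then 1 else 0)

/-- I ⊗ I ⊗ F: a measurement on the ancilla only. -/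
def extA (F : Matrix (Fin 2) (Fin 2) ℂ) : Matrix I3 I3 ℂ :=
  Matrix.of fun p q => (if (p.1, p.2.1) = (q.1, q.2.1) then 1 else 0) * F p.2.2 q.2.2

/-- F ⊗ I_ancilla: a measurement on the two clones. -/
def extCC (F : Matrix (Fin 2 × Fin 2) (Fin 2 × Fin 2) ℂ) : Matrix I3 I3 ℂ :=
  Matrix.of fun p q => F (p.1, p.2.1) (q.1, q.2.1) * (if p.2.2 = q.2.2 then 1 else 0)

/-- Bell basis on two qubits, in the order φ⁺, ψ⁺, φ⁻, ψ⁻. -/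
def bell : Fin 4 → (Fin 2 × Fin 2) → ℂ :=
  ![fun p => if p = (0,0) then ((1 / Real.sqrt 2 : ℝ) : ℂ)
             else if p = (1,1) then ((1 / Real.sqrt 2 : ℝ) : ℂ) else 0,
    fun p => if p = (0,1) then ((1 / Real.sqrt 2 : ℝ) : ℂ)
             else if p = (1,0) then ((1 / Real.sqrt 2 : ℝ) : ℂ) else 0,
    fun p => if p = (0,0) then ((1 / Real.sqrt 2 : ℝ) : ℂ)
             else if p = (1,1) then -((1 / Real.sqrt 2 : ℝ) : ℂ) else 0,
    fun p => if p = (0,1) then ((1 / Real.sqrt 2 : ℝ) : ℂ)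
             else if p = (1,0) then -((1 / Real.sqrt 2 : ℝ) : ℂ) else 0]

/-- Kronecker product of two single-qubit matrices. -/
def kron2 (A B : Matrix (Fin 2) (Fin 2) ℂ) : Matrix (Fin 2 × Fin 2) (Fin 2 × Fin 2) ℂ :=
  Matrix.of fun p q => A p.1 q.1 * B p.2 q.2

/-- Projector onto the symmetric subspace of two qubits: I − |ψ⁻⟩⟨ψ⁻|. -/
def symProj : Matrix (Fin 2 × Fin 2) (Fin 2 × Fin 2) ℂ :=
  1 - Matrix.of fun p q => bell 3 p * conj (bell 3 q)

/-- Projector onto the antisymmetric subspace: |ψ⁻⟩⟨ψ⁻|. -/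
def antiProj : Matrix (Fin 2 × Fin 2) (Fin 2 × Fin 2) ℂ :=
  Matrix.of fun p q => bell 3 p * conj (bell 3 q)

/-- Computational basis vector |abc⟩ of three qubits. -/
def e3 (a b c : Fin 2) : I3 → ℂ := fun p => if p = (a, b, c) then 1 else 0

/-- ∑ₚ conj(v p) w p, the inner product on three qubits. -/
def inner3 (v w : I3 → ℂ) : ℂ := ∑ p : I3, conj (v p) * w p

/-- The state A(3ψ⁺ + ψ⁻) + B(φ⁺ − φ⁻) on two qubits. -/
def kappaVec (A B : ℂ) : Fin 2 × Fin 2 → ℂ :=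
  fun p => A * (3 * bell 1 p + bell 3 p) + B * (bell 0 p - bell 2 p)

/-- (V ⊗ V) applied to a two-qubit vector. -/
def applyVV (V : Matrix (Fin 2) (Fin 2) ℂ) (v : Fin 2 × Fin 2 → ℂ) : Fin 2 × Fin 2 → ℂ :=
  fun p => ∑ q : Fin 2 × Fin 2, V p.1 q.1 * V p.2 q.2 * v q

/-- Weight ⟨v|P|v⟩ of a vector on the subspace with projector P. -/
def weightOn (P : Matrix (Fin 2 × Fin 2) (Fin 2 × Fin 2) ℂ) (v : Fin 2 × Fin 2 → ℂ) : ℝ :=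
  (∑ p : Fin 2 × Fin 2, ∑ q : Fin 2 × Fin 2, conj (v p) * P p q * v q).re

open scoped Kronecker

/-!
The antisymmetric subspace is spanned by ψ⁻, and `ψ⁻ᵀ (V ⊗ V) = (det V) ψ⁻ᵀ` for every 2 × 2
matrix `V`, so for `V ∈ SU(2)` the antisymmetric weight of `(V ⊗ V) κ` is `|⟨ψ⁻|κ⟩|² = |A|²`,
while unitarity keeps its total weight at `‖κ‖² = 10|A|² + 2|B|² = 1`. Hence the symmetric weight
`1 - |A|²` is at least `9|A|²`. If such projectors summed to the identity, summing their weights on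
a subspace would give its dimension: `9 · 1 ≤ 3`, which is absurd.
-/

lemma applyVV_eq_kronecker_mulVec (V : Matrix (Fin 2) (Fin 2) ℂ) (v : Fin 2 × Fin 2 → ℂ) :
    applyVV V v = (V ⊗ₖ V) *ᵥ v := rfl

lemma antiProj_eq_vecMulVec : antiProj = vecMulVec (bell 3) (star (bell 3)) := rfl

lemma symProj_eq_one_sub_antiProj : symProj = 1 - antiProj := rfl

section weightOn

variable (P Q : Matrix (Fin 2 × Fin 2) (Fin 2 × Fin 2) ℂ) (v w : Fin 2 × Fin 2 → ℂ)

lemma weightOn_eq_re_dotProduct : weightOn P v = (star v ⬝ᵥ P *ᵥ v).re := by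
  simp only [weightOn, dotProduct, mulVec, Finset.mul_sum, mul_assoc]
  rfl

lemma weightOn_eq_re_trace : weightOn P v = (trace (P * vecMulVec v (star v))).re := by
  rw [weightOn_eq_re_dotProduct, mul_vecMulVec, trace_vecMulVec, dotProduct_comm]

lemma weightOn_sub : weightOn (P - Q) v = weightOn P v - weightOn Q v := by
  simp only [weightOn_eq_re_dotProduct, sub_mulVec, dotProduct_sub, Complex.sub_re]

lemma weightOn_one : weightOn 1 v = ∑ p, Complex.normSq (v p) := by
  rw [weightOn_eq_re_dotProduct, one_mulVec, dotProduct, Complex.re_sum]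
  exact Finset.sum_congr rfl fun p _ => by simp [Complex.normSq_apply, mul_comm]

lemma weightOn_vecMulVec_star :
    weightOn (vecMulVec w (star w)) v = Complex.normSq (star w ⬝ᵥ v) := by
  rw [weightOn_eq_re_dotProduct, vecMulVec_mulVec, dotProduct_smul, op_smul_eq_smul, smul_eq_mul,
    star_dotProduct v w, Complex.star_def, Complex.mul_conj, Complex.ofReal_re]

lemma weightOn_one_unitary_mulVec {U : Matrix (Fin 2 × Fin 2) (Fin 2 × Fin 2) ℂ}
    (hU : U ∈ unitary _) : weightOn 1 (U *ᵥ v) = weightOn 1 v := by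
  simp only [weightOn_eq_re_dotProduct, one_mulVec, star_mulVec, dotProduct_mulVec, vecMul_vecMul,
    ← star_eq_conjTranspose, Unitary.star_mul_self_of_mem hU, vecMul_one]

end weightOn

lemma sum_weightOn_of_sum_vecMulVec_eq_one {ι : Type*} (s : Finset ι)
    (a : ι → Fin 2 × Fin 2 → ℂ) (h : ∑ i ∈ s, vecMulVec (a i) (star (a i)) = 1)
    (P : Matrix (Fin 2 × Fin 2) (Fin 2 × Fin 2) ℂ) :
    ∑ i ∈ s, weightOn P (a i) = (trace P).re := by
  simp only [weightOn_eq_re_trace, ← Complex.re_sum, ← trace_sum, ← Finset.mul_sum, h, mul_one]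

lemma inv_sqrt_two_mul_self : ((√2 : ℝ) : ℂ)⁻¹ * ((√2 : ℝ) : ℂ)⁻¹ = 1 / 2 := by
  rw [← mul_inv, ← Complex.ofReal_mul, Real.mul_self_sqrt zero_le_two]
  norm_num

lemma star_bell_three : star (bell 3) = bell 3 := by
  funext ⟨i, j⟩
  fin_cases i <;> fin_cases j <;> simp [bell]

lemma bell_three_vecMul_kronecker (V : Matrix (Fin 2) (Fin 2) ℂ) :
    bell 3 ᵥ* (V ⊗ₖ V) = V.det • bell 3 := by
  funext ⟨i, j⟩
  simp only [vecMul, dotProduct, Fintype.sum_prod_type, Fin.sum_univ_two, kroneckerMap_apply,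
    det_fin_two, Pi.smul_apply, smul_eq_mul]
  fin_cases i <;> fin_cases j <;> simp [bell] <;> ring

lemma weightOn_antiProj_kronecker_mulVec (V : Matrix (Fin 2) (Fin 2) ℂ) (v : Fin 2 × Fin 2 → ℂ) :
    weightOn antiProj ((V ⊗ₖ V) *ᵥ v) = Complex.normSq V.det * weightOn antiProj v := by
  rw [antiProj_eq_vecMulVec, weightOn_vecMulVec_star, weightOn_vecMulVec_star, dotProduct_mulVec,
    star_bell_three, bell_three_vecMul_kronecker, smul_dotProduct, smul_eq_mul,
    Complex.normSq_mul]

lemma trace_antiProj : trace antiProj = 1 := by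
  rw [antiProj_eq_vecMulVec, trace_vecMulVec, star_bell_three]
  simp [dotProduct, Fintype.sum_prod_type, bell]
  linear_combination 2 * inv_sqrt_two_mul_self

lemma trace_symProj : trace symProj = 3 := by
  rw [symProj_eq_one_sub_antiProj, trace_sub, trace_one, trace_antiProj]
  norm_num

lemma weightOn_antiProj_kappaVec (A B : ℂ) :
    weightOn antiProj (kappaVec A B) = Complex.normSq A := by
  have hA : star (bell 3) ⬝ᵥ kappaVec A B = A := by
    rw [star_bell_three]
    simp [dotProduct, Fintype.sum_prod_type, kappaVec, bell]
    linear_combination (2 * A) * inv_sqrt_two_mul_self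
  rw [antiProj_eq_vecMulVec, weightOn_vecMulVec_star, hA]

lemma sum_normSq_kappaVec (A B : ℂ) :
    ∑ p, Complex.normSq (kappaVec A B p) = 10 * Complex.normSq A + 2 * Complex.normSq B := by
  have h : Complex.normSq ((√2 : ℝ) : ℂ)⁻¹ = 1 / 2 := by
    rw [map_inv₀, Complex.normSq_ofReal, Real.mul_self_sqrt zero_le_two]
    norm_num
  simp [Fintype.sum_prod_type, kappaVec, bell]
  ring_nf
  simp only [map_mul, h, Complex.normSq_ofNat]
  ring

lemma nine_mul_weightOn_antiProj_le_weightOn_symProj {A B : ℂ} {V : Matrix (Fin 2) (Fin 2) ℂ}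
    (hV : V ∈ specialUnitaryGroup (Fin 2) ℂ)
    (hκ : ∑ p, Complex.normSq (kappaVec A B p) = 1) :
    9 * weightOn antiProj (applyVV V (kappaVec A B)) ≤
      weightOn symProj (applyVV V (kappaVec A B)) := by
  obtain ⟨hU, hdet⟩ := mem_specialUnitaryGroup_iff.mp hV
  have hanti : weightOn antiProj (applyVV V (kappaVec A B)) = Complex.normSq A := by
    rw [applyVV_eq_kronecker_mulVec, weightOn_antiProj_kronecker_mulVec, hdet, map_one, one_mul,
      weightOn_antiProj_kappaVec]
  have htotal : weightOn 1 (applyVV V (kappaVec A B)) = 1 := by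
    rw [applyVV_eq_kronecker_mulVec, weightOn_one_unitary_mulVec _ (kronecker_mem_unitary hU hU),
      weightOn_one, hκ]
  rw [symProj_eq_one_sub_antiProj, weightOn_sub, htotal, hanti]
  linarith [sum_normSq_kappaVec A B, Complex.normSq_nonneg B]

/-- any projector onto (V⊗V)(A(3ψ⁺+ψ⁻)+B(φ⁺−φ⁻)) with V ∈ SU(2) and A ≠ 0
has symmetric weight at least 9 times its antisymmetric weight; hence no finite sum of
such projectors can equal the identity on ℂ²⊗ℂ². -/
theorem no_complete_clone_ancilla_povm :
    (∀ (A B : ℂ) (V : Matrix (Fin 2) (Fin 2) ℂ),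
      V ∈ Matrix.specialUnitaryGroup (Fin 2) ℂ → A ≠ 0 →
      (∑ p : Fin 2 × Fin 2, Complex.normSq (kappaVec A B p) = 1) →
      9 * weightOn antiProj (applyVV V (kappaVec A B)) ≤
        weightOn symProj (applyVV V (kappaVec A B))) ∧
    ∀ (n : ℕ) (A B : Fin n → ℂ) (V : Fin n → Matrix (Fin 2) (Fin 2) ℂ),
      (∀ i, V i ∈ Matrix.specialUnitaryGroup (Fin 2) ℂ) → (∀ i, A i ≠ 0) →
      (∀ i, ∑ p : Fin 2 × Fin 2, Complex.normSq (kappaVec (A i) (B i) p) = 1) →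
      (∑ i : Fin n, Matrix.of fun p q =>
          applyVV (V i) (kappaVec (A i) (B i)) p *
            conj (applyVV (V i) (kappaVec (A i) (B i)) q)) ≠
        (1 : Matrix (Fin 2 × Fin 2) (Fin 2 × Fin 2) ℂ) := by
  refine ⟨fun A B V hV _ hκ => nine_mul_weightOn_antiProj_le_weightOn_symProj hV hκ, ?_⟩
  intro n A B V hV _ hκ hsum
  set a : Fin n → Fin 2 × Fin 2 → ℂ := fun i => applyVV (V i) (kappaVec (A i) (B i))
  have hanti := sum_weightOn_of_sum_vecMulVec_eq_one univ a hsum antiProj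
  have hsym := sum_weightOn_of_sum_vecMulVec_eq_one univ a hsum symProj
  rw [trace_antiProj, Complex.one_re] at hanti
  rw [trace_symProj] at hsym
  have hle : 9 * ∑ i, weightOn antiProj (a i) ≤ ∑ i, weightOn symProj (a i) := by
    rw [mul_sum]
    exact sum_le_sum fun i _ => nine_mul_weightOn_antiProj_le_weightOn_symProj (hV i) (hκ i)
  norm_num [hanti, hsym] at hle
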